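/- Let E be a complete separable metric space with metric d that is a star-convex subset of a vector space with center x₀ satisfying d((1-λ)x₀+λx, y) ≤ (1-λ)d(x₀,y)+λd(x,y) for all λ ∈ [0,1], x,y ∈ E. Let p ≥ 1 and (I, 𝓘) be a measurable space. Then for every jointly measurable process X : I × Ω → E on a probability space such that X_t is p-fold integrable for each t (i.e., E[d(X_t, x₀)^p] < ∞), the map t ↦ law(X_t) from I to the Wasserstein space P_p(E) is measurable with respect to 𝓘 and the Borel σ-field of the Wasserstein metric. -/

import Mathlib

/-!
For a simple process `G` the law of `G t` is a sum of Dirac masses at the finitely many values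
of `G`, with weights measurable in `t`. Coupling the common part of two such laws along the
diagonal and the rest independently bounds their `W_p` distance by the diameter of the values
times the `1/p`-th power of the total variation of the weights, so `W_p(ρ, law (G t))` is a
continuous function of measurable weights. A general process is the pointwise limit of the
simple processes `SimpleFunc.approxOn`; by dominated convergence, using the `p`-th moments,
their laws converge to `law (X t)` in `W_p`, and the triangle inequality for `W_p` (gluing two
couplings along a disintegration) turns this into pointwise convergence of `t ↦ W_p(ρ, law (X t))`.
-/

open MeasureTheory ENNReal

/-- The `p`-th Wasserstein distance: the infimum over couplings of
`(∫ d(x,y)^p dθ)^(1/p)`. -/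
noncomputable def wassersteinP {E : Type*} [MetricSpace E] [MeasurableSpace E]
    (p : ℝ) (μ ν : Measure E) : ℝ≥0∞ :=
  (⨅ θ ∈ {θ : Measure (E × E) |
      IsProbabilityMeasure θ ∧ θ.map Prod.fst = μ ∧ θ.map Prod.snd = ν},
    ∫⁻ z, edist z.1 z.2 ^ p ∂θ) ^ (1 / p)

open Filter Topology
open scoped NNReal

section Couplings

variable {E : Type*} [MeasurableSpace E]

def couplings (μ ν : Measure E) : Set (Measure (E × E)) :=
  {θ | IsProbabilityMeasure θ ∧ θ.map Prod.fst = μ ∧ θ.map Prod.snd = ν}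

lemma map_prodMk_mem_couplings {Ω : Type*} [MeasurableSpace Ω] (P : Measure Ω)
    [IsProbabilityMeasure P] {f g : Ω → E} (hf : Measurable f) (hg : Measurable g) :
    P.map (fun ω => (f ω, g ω)) ∈ couplings (P.map f) (P.map g) :=
  ⟨Measure.isProbabilityMeasure_map (hf.prodMk hg).aemeasurable,
    by rw [Measure.map_map measurable_fst (hf.prodMk hg)]; rfl,
    by rw [Measure.map_map measurable_snd (hf.prodMk hg)]; rfl⟩

lemma map_diag_add_smul_prod_mem_couplings (η α β : Measure E)
    [IsFiniteMeasure α] [SFinite β] [IsProbabilityMeasure (η + α)]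
    (hαβ : α Set.univ = β Set.univ) :
    η.map (fun x => (x, x)) + (α Set.univ)⁻¹ • α.prod β ∈ couplings (η + α) (η + β) := by
  have hdiag : Measurable fun x : E => (x, x) := measurable_id.prodMk measurable_id
  have hrescale : ∀ m : Measure E, m Set.univ = α Set.univ →
      ((α Set.univ)⁻¹ * α Set.univ) • m = m := by
    intro m hm
    rcases eq_or_ne (α Set.univ) 0 with h | h
    · rw [Measure.measure_univ_eq_zero.mp (hm.trans h), smul_zero]
    · rw [ENNReal.inv_mul_cancel h (measure_ne_top α _), one_smul]
  have hfst : (η.map (fun x => (x, x)) + (α Set.univ)⁻¹ • α.prod β).map Prod.fst = η + α := by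
    rw [Measure.map_add _ _ measurable_fst, Measure.map_smul,
      Measure.map_map measurable_fst hdiag, Measure.map_fst_prod, ← hαβ, smul_smul,
      hrescale α rfl]
    exact congrArg (· + α) Measure.map_id
  refine ⟨?_, hfst, ?_⟩
  · rw [← Measure.isProbabilityMeasure_map_iff measurable_fst.aemeasurable, hfst]
    infer_instance
  · rw [Measure.map_add _ _ measurable_snd, Measure.map_smul,
      Measure.map_map measurable_snd hdiag, Measure.map_snd_prod, smul_smul,
      hrescale β hαβ.symm]
    exact congrArg (· + β) Measure.map_id

variable [MetricSpace E]

noncomputable def transportCost (p : ℝ) (θ : Measure (E × E)) : ℝ≥0∞ :=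
  ∫⁻ z, edist z.1 z.2 ^ p ∂θ

lemma wassersteinP_eq_iInf_transportCost (p : ℝ) (μ ν : Measure E) :
    wassersteinP p μ ν = (⨅ θ ∈ couplings μ ν, transportCost p θ) ^ (1 / p) := rfl

lemma wassersteinP_le_of_mem_couplings {p : ℝ} (hp : 0 ≤ p) {μ ν : Measure E}
    {θ : Measure (E × E)} (hθ : θ ∈ couplings μ ν) :
    wassersteinP p μ ν ≤ transportCost p θ ^ (1 / p) :=
  ENNReal.rpow_le_rpow (biInf_le _ hθ) (by positivity)

lemma exists_mem_couplings_transportCost_lt {p : ℝ} (hp : 0 < p) {μ ν : Measure E}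
    {r : ℝ≥0∞} (hr : wassersteinP p μ ν < r) :
    ∃ θ ∈ couplings μ ν, transportCost p θ ^ (1 / p) < r := by
  rw [wassersteinP_eq_iInf_transportCost, one_div, ENNReal.rpow_inv_lt_iff hp] at hr
  simp only [iInf_lt_iff, exists_prop] at hr
  obtain ⟨θ, hθ, hlt⟩ := hr
  exact ⟨θ, hθ, by rwa [one_div, ENNReal.rpow_inv_lt_iff hp]⟩

variable [SecondCountableTopology E] [BorelSpace E]

lemma measurable_edist_rpow (p : ℝ) : Measurable fun z : E × E => edist z.1 z.2 ^ p :=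
  (measurable_fst.edist measurable_snd).pow_const p

lemma wassersteinP_map_le {p : ℝ} (hp : 0 ≤ p) {Ω : Type*} [MeasurableSpace Ω]
    (P : Measure Ω) [IsProbabilityMeasure P] {f g : Ω → E}
    (hf : Measurable f) (hg : Measurable g) :
    wassersteinP p (P.map f) (P.map g) ≤ (∫⁻ ω, edist (f ω) (g ω) ^ p ∂P) ^ (1 / p) := by
  refine (wassersteinP_le_of_mem_couplings hp (map_prodMk_mem_couplings P hf hg)).trans_eq ?_
  rw [transportCost, lintegral_map (measurable_edist_rpow p) (hf.prodMk hg)]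

end Couplings

open ProbabilityTheory in
lemma exists_gluing {α β γ : Type*} [MeasurableSpace α] [MeasurableSpace β]
    [MeasurableSpace γ] [StandardBorelSpace γ] [Nonempty γ]
    (θ₁ : Measure (α × β)) [SFinite θ₁] (θ₂ : Measure (β × γ)) [IsFiniteMeasure θ₂]
    (h : θ₁.map Prod.snd = θ₂.map Prod.fst) :
    ∃ Θ : Measure ((α × β) × γ),
      Θ.map Prod.fst = θ₁ ∧ Θ.map (fun q => (q.1.2, q.2)) = θ₂ := by
  have hm : Measurable fun q : (α × β) × γ => (q.1.2, q.2) :=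
    measurable_fst.snd.prodMk measurable_snd
  refine ⟨θ₁ ⊗ₘ θ₂.condKernel.comap Prod.snd measurable_snd, Measure.fst_compProd _ _, ?_⟩
  conv_rhs => rw [← θ₂.disintegrate θ₂.condKernel, Measure.fst, ← h]
  ext s hs
  rw [Measure.map_apply hm hs, Measure.compProd_apply (hm hs), Measure.compProd_apply hs,
    lintegral_map (Kernel.measurable_kernel_prodMk_left hs) measurable_snd]
  rfl

section Triangle

variable {E : Type*} [MetricSpace E] [CompleteSpace E] [SecondCountableTopology E]
  [MeasurableSpace E] [BorelSpace E]

lemma wassersteinP_le_add_of_mem_couplings {p : ℝ} (hp : 1 ≤ p) {μ κ ν : Measure E}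
    {θ₁ θ₂ : Measure (E × E)} (hθ₁ : θ₁ ∈ couplings μ κ) (hθ₂ : θ₂ ∈ couplings κ ν) :
    wassersteinP p μ ν ≤ transportCost p θ₁ ^ (1 / p) + transportCost p θ₂ ^ (1 / p) := by
  obtain ⟨hθ₁p, hθ₁μ, hθ₁κ⟩ := hθ₁
  obtain ⟨hθ₂p, hθ₂κ, hθ₂ν⟩ := hθ₂
  have : Nonempty E := (nonempty_of_isProbabilityMeasure θ₁).map Prod.fst
  obtain ⟨Θ, hΘ₁, hΘ₂⟩ := exists_gluing θ₁ θ₂ (hθ₁κ.trans hθ₂κ.symm)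
  have h₁₃ : Measurable fun q : (E × E) × E => (q.1.1, q.2) :=
    measurable_fst.fst.prodMk measurable_snd
  have h₂₃ : Measurable fun q : (E × E) × E => (q.1.2, q.2) :=
    measurable_fst.snd.prodMk measurable_snd
  have hΘp : IsProbabilityMeasure Θ := by
    rw [← Measure.isProbabilityMeasure_map_iff measurable_fst.aemeasurable, hΘ₁]
    exact hθ₁p
  have hθ : Θ.map (fun q => (q.1.1, q.2)) ∈ couplings μ ν := by
    refine ⟨Measure.isProbabilityMeasure_map h₁₃.aemeasurable, ?_, ?_⟩
    · rw [Measure.map_map measurable_fst h₁₃, ← hθ₁μ, ← hΘ₁,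
        Measure.map_map measurable_fst measurable_fst]
      rfl
    · rw [Measure.map_map measurable_snd h₁₃, ← hθ₂ν, ← hΘ₂, Measure.map_map measurable_snd h₂₃]
      rfl
  have hcost₁ : ∫⁻ q, edist q.1.1 q.1.2 ^ p ∂Θ = transportCost p θ₁ := by
    rw [transportCost, ← hΘ₁, lintegral_map (measurable_edist_rpow p) measurable_fst]
  have hcost₂ : ∫⁻ q, edist q.1.2 q.2 ^ p ∂Θ = transportCost p θ₂ := by
    rw [transportCost, ← hΘ₂, lintegral_map (measurable_edist_rpow p) h₂₃]
  refine (wassersteinP_le_of_mem_couplings (by positivity) hθ).trans ?_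
  rw [transportCost, lintegral_map (measurable_edist_rpow p) h₁₃, ← hcost₁, ← hcost₂]
  calc (∫⁻ q, edist q.1.1 q.2 ^ p ∂Θ) ^ (1 / p)
      ≤ (∫⁻ q, (edist q.1.1 q.1.2 + edist q.1.2 q.2) ^ p ∂Θ) ^ (1 / p) := by
        gcongr with q
        exact edist_triangle _ _ _
    _ ≤ _ := ENNReal.lintegral_Lp_add_le
        (measurable_fst.fst.edist measurable_fst.snd).aemeasurable
        (measurable_fst.snd.edist measurable_snd).aemeasurable hp

lemma wassersteinP_triangle {p : ℝ} (hp : 1 ≤ p) (μ κ ν : Measure E) :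
    wassersteinP p μ ν ≤ wassersteinP p μ κ + wassersteinP p κ ν := by
  refine ENNReal.le_of_forall_pos_le_add fun ε hε hfin => ?_
  have hε2 : (ε / 2 : ℝ≥0∞) ≠ 0 := by simpa using hε.ne'
  obtain ⟨θ₁, hθ₁, hlt₁⟩ := exists_mem_couplings_transportCost_lt (by positivity)
    (ENNReal.lt_add_right (lt_of_le_of_lt le_self_add hfin).ne hε2)
  obtain ⟨θ₂, hθ₂, hlt₂⟩ := exists_mem_couplings_transportCost_lt (by positivity)
    (ENNReal.lt_add_right (lt_of_le_of_lt le_add_self hfin).ne hε2)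
  calc wassersteinP p μ ν ≤ transportCost p θ₁ ^ (1 / p) + transportCost p θ₂ ^ (1 / p) :=
        wassersteinP_le_add_of_mem_couplings hp hθ₁ hθ₂
    _ ≤ (wassersteinP p μ κ + ε / 2) + (wassersteinP p κ ν + ε / 2) := by gcongr
    _ = wassersteinP p μ κ + wassersteinP p κ ν + ε := by
        rw [add_add_add_comm, ENNReal.add_halves]

end Triangle

lemma ENNReal.tendsto_of_le_add_of_le_add {α : Type*} {l : Filter α} {f ε : α → ℝ≥0∞}
    {a : ℝ≥0∞} (hε : Tendsto ε l (𝓝 0)) (h₁ : ∀ᶠ x in l, a ≤ f x + ε x)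
    (h₂ : ∀ᶠ x in l, f x ≤ a + ε x) : Tendsto f l (𝓝 a) := by
  have hsmall : ∀ r : ℝ≥0, 0 < r → ∀ᶠ x in l, ε x ≤ r := fun r hr =>
    hε.eventually (Iic_mem_nhds (by exact_mod_cast hr))
  refine tendsto_order.2 ⟨fun b hb => ?_, fun b hb => ?_⟩
  · obtain ⟨r, hr, hbr⟩ := ENNReal.lt_iff_exists_add_pos_lt.1 hb
    filter_upwards [h₁, hsmall r hr] with x hx hεx
    exact lt_of_add_lt_add_right (hbr.trans_le (hx.trans (by gcongr)))
  · obtain ⟨r, hr, hbr⟩ := ENNReal.lt_iff_exists_add_pos_lt.1 hb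
    filter_upwards [h₂, hsmall r hr] with x hx hεx
    exact (hx.trans (by gcongr)).trans_lt hbr

lemma tendsto_sum_tsub_add_sum_tsub {ι : Type*} [Fintype ι] {w : ι → ℝ≥0∞}
    (hw : ∀ i, w i ≠ ⊤) :
    Tendsto (fun w' => ∑ i, (w i - w' i) + ∑ i, (w' i - w i)) (𝓝 w) (𝓝 0) := by
  have hcoord : ∀ i, Tendsto (fun w' : ι → ℝ≥0∞ => w' i) (𝓝 w) (𝓝 (w i)) :=
    fun i => (continuous_apply i).tendsto w
  have h₁ : Tendsto (fun w' => ∑ i, (w i - w' i)) (𝓝 w) (𝓝 (∑ i, (w i - w i))) :=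
    tendsto_finsetSum _ fun i _ => ENNReal.Tendsto.sub tendsto_const_nhds (hcoord i) (.inl (hw i))
  have h₂ : Tendsto (fun w' => ∑ i, (w' i - w i)) (𝓝 w) (𝓝 (∑ i, (w i - w i))) :=
    tendsto_finsetSum _ fun i _ => ENNReal.Tendsto.sub (hcoord i) tendsto_const_nhds (.inl (hw i))
  simpa using h₁.add h₂

section FiniteSupport

variable {E : Type*} [MetricSpace E] [SecondCountableTopology E] [MeasurableSpace E]
  [BorelSpace E]

lemma wassersteinP_add_le {p : ℝ} (hp : 0 < p) {s : Set E} (η α β : Measure E)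
    [IsFiniteMeasure α] [IsFiniteMeasure β] [IsProbabilityMeasure (η + α)]
    (hαβ : α Set.univ = β Set.univ) (hα : ∀ᵐ x ∂α, x ∈ s) (hβ : ∀ᵐ x ∂β, x ∈ s) :
    wassersteinP p (η + α) (η + β) ≤ Metric.ediam s * α Set.univ ^ (1 / p) := by
  set Z := α Set.univ
  set D := Metric.ediam s
  have hdiag : Measurable fun x : E => (x, x) := measurable_id.prodMk measurable_id
  set θ : Measure (E × E) := η.map (fun x => (x, x)) + Z⁻¹ • α.prod β
  have hθ : θ ∈ couplings (η + α) (η + β) := map_diag_add_smul_prod_mem_couplings η α β hαβ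
  have hbound : ∀ᵐ z ∂α.prod β, edist z.1 z.2 ^ p ≤ D ^ p := by
    filter_upwards [Measure.quasiMeasurePreserving_fst.ae hα,
      Measure.quasiMeasurePreserving_snd.ae hβ] with z hz₁ hz₂
    gcongr
    exact Metric.edist_le_ediam_of_mem hz₁ hz₂
  have hcost : transportCost p θ ≤ D ^ p * Z := by
    rw [transportCost, lintegral_add_measure, lintegral_smul_measure,
      lintegral_map (measurable_edist_rpow p) hdiag]
    simp only [edist_self, ENNReal.zero_rpow_of_pos hp, lintegral_zero, zero_add]
    calc Z⁻¹ * ∫⁻ z, edist z.1 z.2 ^ p ∂α.prod β ≤ Z⁻¹ * (D ^ p * (Z * β Set.univ)) := by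
          gcongr
          refine (lintegral_mono_ae hbound).trans_eq ?_
          rw [lintegral_const, ← Set.univ_prod_univ, Measure.prod_prod]
      _ = D ^ p * Z * (Z⁻¹ * Z) := by rw [← hαβ]; ring
      _ ≤ D ^ p * Z := mul_le_of_le_one_right' (ENNReal.inv_mul_le_one Z)
  calc wassersteinP p (η + α) (η + β) ≤ transportCost p θ ^ (1 / p) :=
        wassersteinP_le_of_mem_couplings hp.le hθ
    _ ≤ (D ^ p * Z) ^ (1 / p) := by gcongr
    _ = D * Z ^ (1 / p) := by
        rw [ENNReal.mul_rpow_of_nonneg _ _ (by positivity), ← ENNReal.rpow_mul,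
          mul_one_div_cancel hp.ne', ENNReal.rpow_one]

end FiniteSupport

section SumDirac

variable {E : Type*} [MeasurableSpace E] {ι : Type*} [Fintype ι]

lemma sum_smul_dirac_apply_univ (w : ι → ℝ≥0∞) (v : ι → E) :
    (∑ i, w i • Measure.dirac (v i)) Set.univ = ∑ i, w i := by
  simp

lemma ae_mem_range_sum_smul_dirac [MeasurableSingletonClass E] (w : ι → ℝ≥0∞) (v : ι → E) :
    ∀ᵐ x ∂(∑ i, w i • Measure.dirac (v i)), x ∈ Set.range v := by
  rw [ae_iff, Measure.coe_finsetSum, Finset.sum_apply]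
  refine Finset.sum_eq_zero fun i _ => ?_
  simp

variable [MetricSpace E] [SecondCountableTopology E] [BorelSpace E]

lemma wassersteinP_sum_smul_dirac_le {p : ℝ} (hp : 0 < p) (v : ι → E) {w w' : ι → ℝ≥0∞}
    (hw : ∑ i, w i = 1) (hw' : ∑ i, w' i = 1) :
    wassersteinP p (∑ i, w i • Measure.dirac (v i)) (∑ i, w' i • Measure.dirac (v i)) ≤
      Metric.ediam (Set.range v) * (∑ i, (w i - w' i)) ^ (1 / p) := by
  set η := ∑ i, min (w i) (w' i) • Measure.dirac (v i)
  set α := ∑ i, (w i - w' i) • Measure.dirac (v i)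
  set β := ∑ i, (w' i - w i) • Measure.dirac (v i)
  have hηα : η + α = ∑ i, w i • Measure.dirac (v i) := by
    simp only [η, α, ← Finset.sum_add_distrib, ← add_smul, add_comm (min _ _), tsub_add_min]
  have hηβ : η + β = ∑ i, w' i • Measure.dirac (v i) := by
    simp only [η, β, ← Finset.sum_add_distrib, ← add_smul, add_comm (min _ _), min_comm (w _),
      tsub_add_min]
  have hmin : ∑ i, min (w i) (w' i) ≠ ⊤ :=
    ne_top_of_le_ne_top (by simp [hw]) (Finset.sum_le_sum fun i _ => min_le_left (w i) (w' i))
  have hαβ : α Set.univ = β Set.univ := by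
    simp only [α, β, sum_smul_dirac_apply_univ]
    refine (ENNReal.add_left_inj hmin).mp ?_
    calc ∑ i, (w i - w' i) + ∑ i, min (w i) (w' i) = ∑ i, w i := by
          simp only [← Finset.sum_add_distrib, tsub_add_min]
      _ = ∑ i, w' i := hw.trans hw'.symm
      _ = ∑ i, (w' i - w i) + ∑ i, min (w i) (w' i) := by
          simp only [← Finset.sum_add_distrib, min_comm (w _), tsub_add_min]
  have : IsProbabilityMeasure (η + α) := ⟨by rw [hηα, sum_smul_dirac_apply_univ, hw]⟩
  have : IsFiniteMeasure α := ⟨by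
    simp only [α, sum_smul_dirac_apply_univ]
    exact (Finset.sum_le_sum fun i _ => tsub_le_self).trans_lt (by simp [hw])⟩
  have : IsFiniteMeasure β := ⟨hαβ ▸ measure_lt_top α Set.univ⟩
  rw [← hηα, ← hηβ]
  simpa only [α, sum_smul_dirac_apply_univ] using wassersteinP_add_le hp η α β hαβ
    (ae_mem_range_sum_smul_dirac _ v) (ae_mem_range_sum_smul_dirac _ v)

lemma continuousOn_wassersteinP_sum_smul_dirac [CompleteSpace E] {p : ℝ} (hp : 1 ≤ p)
    (ρ : Measure E) (v : ι → E) :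
    ContinuousOn (fun w : ι → ℝ≥0∞ => wassersteinP p ρ (∑ i, w i • Measure.dirac (v i)))
      {w | ∑ i, w i = 1} := by
  intro w hw
  have hp0 : 0 < p := by positivity
  have hwfin : ∀ i, w i ≠ ⊤ := fun i =>
    ENNReal.sum_ne_top.mp (by rw [hw]; exact one_ne_top) i (Finset.mem_univ i)
  set ε : (ι → ℝ≥0∞) → ℝ≥0∞ := fun w' =>
    Metric.ediam (Set.range v) * (∑ i, (w i - w' i) + ∑ i, (w' i - w i)) ^ (1 / p)
  have hε : Tendsto ε (𝓝 w) (𝓝 0) := by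
    have h := (tendsto_sum_tsub_add_sum_tsub hwfin).ennrpow_const (1 / p)
    rw [ENNReal.zero_rpow_of_pos (by positivity)] at h
    simpa only [mul_zero] using
      ENNReal.Tendsto.const_mul h (.inr (Set.finite_range v).isBounded.ediam_ne_top)
  refine ENNReal.tendsto_of_le_add_of_le_add (hε.mono_left nhdsWithin_le_nhds) ?_ ?_
  · filter_upwards [self_mem_nhdsWithin] with w' hw'
    refine (wassersteinP_triangle hp _ _ _).trans (add_le_add le_rfl ?_)
    refine (wassersteinP_sum_smul_dirac_le hp0 v hw' hw).trans ?_
    dsimp only [ε]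
    gcongr
    exact le_add_self
  · filter_upwards [self_mem_nhdsWithin] with w' hw'
    refine (wassersteinP_triangle hp _ _ _).trans (add_le_add le_rfl ?_)
    refine (wassersteinP_sum_smul_dirac_le hp0 v hw hw').trans ?_
    dsimp only [ε]
    gcongr
    exact le_self_add

end SumDirac

lemma tendsto_lintegral_edist_rpow_of_tendsto {E Ω : Type*} [MetricSpace E]
    [SecondCountableTopology E] [MeasurableSpace E] [BorelSpace E] [MeasurableSpace Ω]
    {P : Measure Ω} {p : ℝ} (hp : 0 < p) {g : ℕ → Ω → E} {f : Ω → E} {x₀ : E}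
    (hg : ∀ n, Measurable (g n)) (hf : Measurable f)
    (hlim : ∀ ω, Tendsto (fun n => g n ω) atTop (𝓝 (f ω)))
    (hbound : ∀ n ω, edist (g n ω) (f ω) ≤ edist x₀ (f ω))
    (hint : ∫⁻ ω, edist x₀ (f ω) ^ p ∂P ≠ ⊤) :
    Tendsto (fun n => ∫⁻ ω, edist (g n ω) (f ω) ^ p ∂P) atTop (𝓝 0) := by
  have hpow : ∀ ω, Tendsto (fun n => edist (g n ω) (f ω) ^ p) atTop (𝓝 0) := fun ω => by
    simpa [ENNReal.zero_rpow_of_pos hp] using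
      (tendsto_iff_edist_tendsto_0.mp (hlim ω)).ennrpow_const p
  simpa using tendsto_lintegral_of_dominated_convergence (fun ω => edist x₀ (f ω) ^ p)
    (fun n => ((hg n).edist hf).pow_const p)
    (fun n => ae_of_all _ fun ω => ENNReal.rpow_le_rpow (hbound n ω) hp.le) hint (ae_of_all _ hpow)

section Law

variable {E : Type*} [MetricSpace E] [CompleteSpace E] [SecondCountableTopology E]
  [MeasurableSpace E] [BorelSpace E] {I : Type*} [MeasurableSpace I]
  {Ω : Type*} [MeasurableSpace Ω] (P : Measure Ω) [IsProbabilityMeasure P]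

lemma measurable_wassersteinP_map_simpleFunc {p : ℝ} (hp : 1 ≤ p)
    (G : SimpleFunc (I × Ω) E) (ρ : Measure E) :
    Measurable fun t => wassersteinP p ρ (P.map fun ω => G (t, ω)) := by
  set w : I → G.range → ℝ≥0∞ := fun t a => P ((fun ω => G (t, ω)) ⁻¹' {(a : E)})
  have hGt : ∀ t, Measurable fun ω => G (t, ω) := fun t => G.measurable.comp measurable_prodMk_left
  have hlaw : ∀ t, P.map (fun ω => G (t, ω)) = ∑ a, w t a • Measure.dirac (a : E) := by
    intro t
    refine ((Measure.ae_mem_finset_iff_map_eq_sum_dirac (hGt t).aemeasurable).mp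
      (ae_of_all _ fun ω => G.mem_range_self _)).trans ?_
    exact (Finset.sum_coe_sort G.range _).symm
  have hw : ∀ t, w t ∈ {w : G.range → ℝ≥0∞ | ∑ a, w a = 1} := fun t => by
    show ∑ a, w t a = 1
    rw [← sum_smul_dirac_apply_univ _ ((↑) : G.range → E), ← hlaw,
      Measure.map_apply (hGt t) MeasurableSet.univ, Set.preimage_univ, measure_univ]
  have hw_meas : Measurable fun t => (⟨w t, hw t⟩ : {w : G.range → ℝ≥0∞ | ∑ a, w a = 1}) :=
    (measurable_pi_lambda w fun a =>
      measurable_measure_prodMk_left (ν := P) (G.measurableSet_preimage {(a : E)})).subtype_mk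
  simp_rw [hlaw]
  exact ((continuousOn_wassersteinP_sum_smul_dirac hp ρ _).domRestrict.measurable.comp hw_meas :)

lemma measurable_wassersteinP_map {p : ℝ} (hp : 1 ≤ p) (X : I → Ω → E)
    (hX : Measurable (Function.uncurry X)) (x₀ : E)
    (hint : ∀ t, ∫⁻ ω, edist (X t ω) x₀ ^ p ∂P ≠ ⊤) (ρ : Measure E) :
    Measurable fun t => wassersteinP p ρ (P.map (X t)) := by
  set F := SimpleFunc.approxOn (Function.uncurry X) hX Set.univ x₀ (Set.mem_univ x₀)
  refine measurable_of_tendsto_metrizable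
    (fun n => measurable_wassersteinP_map_simpleFunc P hp (F n) ρ) (tendsto_pi_nhds.2 fun t => ?_)
  have hXt : Measurable (X t) := hX.comp measurable_prodMk_left
  have hFt : ∀ n, Measurable fun ω => F n (t, ω) := fun n =>
    (F n).measurable.comp measurable_prodMk_left
  set ε := fun n => (∫⁻ ω, edist (F n (t, ω)) (X t ω) ^ p ∂P) ^ (1 / p)
  have hε : Tendsto ε atTop (𝓝 0) := by
    have h := (tendsto_lintegral_edist_rpow_of_tendsto (by positivity) hFt hXt
      (fun ω => SimpleFunc.tendsto_approxOn hX (Set.mem_univ x₀) (by simp))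
      (fun n ω => SimpleFunc.edist_approxOn_le hX (Set.mem_univ x₀) (t, ω) n)
      (by simpa only [edist_comm] using hint t)).ennrpow_const (1 / p)
    rwa [ENNReal.zero_rpow_of_pos (by positivity)] at h
  have hdist : ∀ n, wassersteinP p (P.map fun ω => F n (t, ω)) (P.map (X t)) ≤ ε n :=
    fun n => wassersteinP_map_le (by positivity) P (hFt n) hXt
  have hdist' : ∀ n, wassersteinP p (P.map (X t)) (P.map fun ω => F n (t, ω)) ≤ ε n := fun n =>
    (wassersteinP_map_le (by positivity) P hXt (hFt n)).trans_eq
      (congrArg (· ^ (1 / p)) (lintegral_congr fun ω => by rw [edist_comm]))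
  refine ENNReal.tendsto_of_le_add_of_le_add hε (.of_forall fun n => ?_)
    (.of_forall fun n => ?_)
  · exact (wassersteinP_triangle hp _ _ _).trans (add_le_add le_rfl (hdist n))
  · exact (wassersteinP_triangle hp _ _ _).trans (add_le_add le_rfl (hdist' n))

end Law

theorem stmt8_general {V : Type*}
    (S : Set V) (x₀ : V) (hx₀ : x₀ ∈ S)
    [MetricSpace S] [CompleteSpace S] [TopologicalSpace.SeparableSpace S]
    [MeasurableSpace S] [BorelSpace S]
    (p : ℝ) (hp : 1 ≤ p)
    {I : Type*} [MeasurableSpace I]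
    {Ω : Type*} [MeasurableSpace Ω] (P : Measure Ω) [IsProbabilityMeasure P]
    (X : I → Ω → S)
    (hX : Measurable (Function.uncurry X))
    (hint : ∀ t, ∫⁻ ω, edist (X t ω) (⟨x₀, hx₀⟩ : S) ^ p ∂P ≠ ∞) :
    @Measurable I (Measure S) _
      (MeasurableSpace.generateFrom
        {B : Set (Measure S) | ∃ ρ r, B = {σ | wassersteinP p ρ σ < r}})
      (fun t => Measure.map (X t) P) := by
  refine measurable_generateFrom ?_
  rintro _ ⟨ρ, r, rfl⟩
  exact measurable_wassersteinP_map P hp X hX ⟨x₀, hx₀⟩ hint ρ measurableSet_Iio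

/-- Borel measurability in the `p`-th Wasserstein space of the law map of a jointly
measurable `p`-fold integrable process with values in a complete separable star-convex
metric set whose metric satisfies the convexity condition. -/
theorem stmt8 {V : Type*} [AddCommGroup V] [Module ℝ V]
    (S : Set V) (x₀ : V) (hx₀ : x₀ ∈ S)
    (hstar : ∀ x ∈ S, ∀ l : ℝ, l ∈ Set.Icc (0:ℝ) 1 → (1 - l) • x₀ + l • x ∈ S)
    [MetricSpace S] [CompleteSpace S] [TopologicalSpace.SeparableSpace S]
    [MeasurableSpace S] [BorelSpace S]
    (hconv : ∀ (l : ℝ) (hl : l ∈ Set.Icc (0:ℝ) 1) (x y : S),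
      dist (⟨(1 - l) • x₀ + l • (x : V), hstar x x.2 l hl⟩ : S) y
        ≤ (1 - l) * dist (⟨x₀, hx₀⟩ : S) y + l * dist x y)
    (p : ℝ) (hp : 1 ≤ p)
    {I : Type*} [MeasurableSpace I]
    {Ω : Type*} [MeasurableSpace Ω] (P : Measure Ω) [IsProbabilityMeasure P]
    (X : I → Ω → S)
    (hX : Measurable (Function.uncurry X))
    (hint : ∀ t, ∫⁻ ω, edist (X t ω) (⟨x₀, hx₀⟩ : S) ^ p ∂P ≠ ∞) :
    @Measurable I (Measure S) _
      (MeasurableSpace.generateFrom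
        {B : Set (Measure S) | ∃ ρ r, B = {σ | wassersteinP p ρ σ < r}})
      (fun t => Measure.map (X t) P) :=
  stmt8_general S x₀ hx₀ p hp P X hX hint
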